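/- arXiv:1708.03534 — 4 statements merged into one kernel-verified Lean document; each statement's English description precedes it below -/
import Mathlib

section
/- Let R be a Kähler algebraic curvature tensor with nonnegative orthogonal bisectional curvature on a Hermitian space of dimension n ≥ 2. Then for any unitary frame and any indices α ≠ β, R_{αᾱαᾱ} + R_{ββ̄ββ̄} ≥ 0. (Proof: apply NOB to the orthogonal pairs (e_α−e_β)/2, (e_α+e_β)/2 and (e_α−ie_β)/2, (e_α+ie_β)/2 and add the resulting inequalities.) -/
noncomputable section

open Complex

/-- A Kähler algebraic curvature tensor on the Hermitian space `ℂⁿ`: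
`R x y z w` stands for `R(X, Ȳ, Z, W̄)`; it is complex-linear in the unbarred
slots (1 and 3), conjugate-linear in the barred slots (2 and 4), and satisfies
the Kähler symmetries `R(X,Ȳ,Z,W̄) = R(Z,Ȳ,X,W̄) = R(Z,W̄,X,Ȳ)` together with
the conjugate symmetry `R(X,Ȳ,Z,W̄) = conj (R(Y,X̄,W,Z̄))`. -/
structure KahlerCurvatureTensor (n : ℕ) where
  R : EuclideanSpace ℂ (Fin n) → EuclideanSpace ℂ (Fin n) →
      EuclideanSpace ℂ (Fin n) → EuclideanSpace ℂ (Fin n) → ℂ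
  map_add₁ : ∀ x x' y z w, R (x + x') y z w = R x y z w + R x' y z w
  map_smul₁ : ∀ (c : ℂ) x y z w, R (c • x) y z w = c * R x y z w
  map_add₂ : ∀ x y y' z w, R x (y + y') z w = R x y z w + R x y' z w
  map_smul₂ : ∀ (c : ℂ) x y z w, R x (c • y) z w = (starRingEnd ℂ) c * R x y z w
  map_add₃ : ∀ x y z z' w, R x y (z + z') w = R x y z w + R x y z' w
  map_smul₃ : ∀ (c : ℂ) x y z w, R x y (c • z) w = c * R x y z w
  map_add₄ : ∀ x y z w w', R x y z (w + w') = R x y z w + R x y z w'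
  map_smul₄ : ∀ (c : ℂ) x y z w, R x y z (c • w) = (starRingEnd ℂ) c * R x y z w
  sym₁₃ : ∀ x y z w, R x y z w = R z y x w
  symPair : ∀ x y z w, R x y z w = R z w x y
  conjSym : ∀ x y z w, R x y z w = (starRingEnd ℂ) (R y x w z)

/-- Nonnegative orthogonal bisectional curvature: `R(X,X̄,Y,Ȳ) ≥ 0` for all
`(1,0)`-vectors `X, Y` with `⟨X, Ȳ⟩ = 0`. -/
def KahlerCurvatureTensor.NOB {n : ℕ} (T : KahlerCurvatureTensor n) : Prop :=
  ∀ x y : EuclideanSpace ℂ (Fin n), (inner ℂ x y : ℂ) = 0 → 0 ≤ (T.R x x y y).re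

/-! For an orthogonal pair `a, b` of equal length, `a - b ⊥ a + b` and `a - I • b ⊥ a + I • b`,
so NOB applies to both pairs; by the Kähler symmetries the two bisectional curvatures add up
to `2 (R(a,ā,a,ā) + R(b,b̄,b,b̄))`. -/

theorem inner_sub_add_eq_zero {𝕜 E : Type*} [RCLike 𝕜] [NormedAddCommGroup E]
    [InnerProductSpace 𝕜 E] {x y : E} (hxy : inner 𝕜 x y = (0 : 𝕜)) (hnorm : ‖x‖ = ‖y‖) :
    inner 𝕜 (x - y) (x + y) = (0 : 𝕜) := by
  have hyx : inner 𝕜 y x = (0 : 𝕜) := inner_eq_zero_symm.mp hxy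
  rw [inner_sub_left, inner_add_right, inner_add_right, hxy, hyx,
    inner_self_eq_norm_sq_to_K, inner_self_eq_norm_sq_to_K, hnorm]
  ring

namespace KahlerCurvatureTensor

variable {n : ℕ} (T : KahlerCurvatureTensor n)

theorem R_sub_add_add_R_sub_I_smul_add_I_smul (a b : EuclideanSpace ℂ (Fin n)) :
    T.R (a - b) (a - b) (a + b) (a + b) + T.R (a - I • b) (a - I • b) (a + I • b) (a + I • b)
      = 2 * (T.R a a a a + T.R b b b b) := by
  simp only [sub_eq_add_neg, ← neg_one_smul ℂ b, ← neg_smul, T.map_add₁, T.map_add₂,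
    T.map_add₃, T.map_add₄, T.map_smul₁, T.map_smul₂, T.map_smul₃, T.map_smul₄, map_neg,
    map_one, conj_I]
  simp only [neg_neg, neg_mul, mul_neg, ← mul_assoc, I_mul_I, one_mul]
  linear_combination (1 - I) * T.symPair a a a b + (1 + I) * T.symPair a a b a
    + (1 - I) * T.symPair b b a b + (1 + I) * T.symPair b b b a
    + 4 * T.sym₁₃ a a b b - 2 * T.symPair a a b b - 2 * T.symPair a b b a

theorem NOB.re_add_nonneg {T : KahlerCurvatureTensor n} (hT : T.NOB)
    {a b : EuclideanSpace ℂ (Fin n)} (hab : inner ℂ a b = (0 : ℂ)) (hnorm : ‖a‖ = ‖b‖) :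
    0 ≤ (T.R a a a a).re + (T.R b b b b).re := by
  have hb : 0 ≤ (T.R (a - b) (a - b) (a + b) (a + b)).re :=
    hT _ _ (inner_sub_add_eq_zero hab hnorm)
  have hIb : 0 ≤ (T.R (a - I • b) (a - I • b) (a + I • b) (a + I • b)).re :=
    hT _ _ (inner_sub_add_eq_zero (by rw [inner_smul_right, hab, mul_zero])
      (by rw [norm_smul, norm_I, one_mul, hnorm]))
  have hsum := congrArg re (T.R_sub_add_add_R_sub_I_smul_add_I_smul a b)
  simp only [add_re, mul_re, re_ofNat, im_ofNat, zero_mul, sub_zero] at hsum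
  linarith

end KahlerCurvatureTensor

theorem nob_sum_holomorphic_sectional_nonneg_general {n : ℕ}
    (T : KahlerCurvatureTensor n) (hNOB : T.NOB)
    (e : Fin n → EuclideanSpace ℂ (Fin n)) (he : Orthonormal ℂ e)
    (α β : Fin n) (hαβ : α ≠ β) :
    0 ≤ (T.R (e α) (e α) (e α) (e α)).re + (T.R (e β) (e β) (e β) (e β)).re :=
  hNOB.re_add_nonneg (he.inner_eq_zero hαβ) (by rw [he.norm_eq_one, he.norm_eq_one])

/-- if a Kähler algebraic curvature tensor (with `n ≥ 2`) has
nonnegative orthogonal bisectional curvature, then for any unitary frame and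
any `α ≠ β`, `R_{αᾱαᾱ} + R_{ββ̄ββ̄} ≥ 0`. -/
theorem nob_sum_holomorphic_sectional_nonneg {n : ℕ} (hn : 2 ≤ n)
    (T : KahlerCurvatureTensor n) (hNOB : T.NOB)
    (e : Fin n → EuclideanSpace ℂ (Fin n)) (he : Orthonormal ℂ e)
    (α β : Fin n) (hαβ : α ≠ β) :
    0 ≤ (T.R (e α) (e α) (e α) (e α)).re + (T.R (e β) (e β) (e β) (e β)).re :=
  nob_sum_holomorphic_sectional_nonneg_general T hNOB e he α β hαβ
end
end

section
/- Let R be a Kähler algebraic curvature tensor on a Hermitian space of dimension n ≥ 2 with nonnegative orthogonal bisectional curvature and vanishing Ricci curvature (i.e., for every unitary frame, Σ_γ R_{αᾱγγ̄} = 0 for all α). Then R_{αᾱαᾱ} = 0 for every unit vector e_α, and consequently R ≡ 0. -/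
/-!
In a unitary frame extending a unit vector `e`, Ricci-flatness writes `R(e,ē,e,ē)` as minus a
sum of orthogonal bisectional curvatures, so `R(e,ē,e,ē) ≤ 0`. For orthonormal `e, f`, NOB
applied to the orthogonal pairs `e + c f, e - c f` with `c = 1, i` gives
`R(e,ē,e,ē) + R(f,f̄,f,f̄) ≥ 0`, so the holomorphic sectional curvature vanishes. Polarizing,
first along `x ± c z` with `c = 1, i` and then in each pair of slots, where `R` is sesquilinear,
shows that a Kähler curvature tensor with vanishing holomorphic sectional curvature is zero.
-/

noncomputable section

open Complex

open ComplexConjugate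

theorem LinearMap.IsAlt.apply_eq_zero {E : Type*} [AddCommGroup E] [Module ℂ E]
    {B : E →ₗ[ℂ] E →ₗ⋆[ℂ] ℂ} (hB : B.IsAlt) (x y : E) : B x y = 0 := by
  have h₁ : B x (I • y) = -I * B x y := by simp
  have h₂ : B x (I • y) = I * B x y := by
    rw [← hB.neg, ← hB.neg y x]
    simp
  have h : (2 * I) * B x y = 0 := by linear_combination h₁ - h₂
  exact (mul_eq_zero.1 h).resolve_left (by simp)

theorem OrthonormalBasis.exists_apply_eq {𝕜 E ι : Type*} [RCLike 𝕜] [NormedAddCommGroup E]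
    [InnerProductSpace 𝕜 E] [FiniteDimensional 𝕜 E] [Fintype ι]
    (hcard : Module.finrank 𝕜 E = Fintype.card ι) (i : ι) {x : E} (hx : ‖x‖ = 1) :
    ∃ b : OrthonormalBasis ι 𝕜 E, b i = x := by
  have hv : Orthonormal 𝕜 (({i} : Set ι).domRestrict fun _ => x) := by
    rw [orthonormal_iff_ite]
    rintro ⟨j, rfl⟩ ⟨k, rfl⟩
    simp [Set.domRestrict, inner_self_eq_norm_sq_to_K, hx]
  obtain ⟨b, hb⟩ := hv.exists_orthonormalBasis_extension_of_card_eq hcard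
  exact ⟨b, hb i rfl⟩

theorem inner_add_smul_sub_smul_eq_zero {𝕜 E : Type*} [RCLike 𝕜] [NormedAddCommGroup E]
    [InnerProductSpace 𝕜 E] {x y : E} (hxy : inner 𝕜 x y = 0) {c : 𝕜} (hc : ‖c‖ = 1)
    (hnorm : ‖x‖ = ‖y‖) : inner 𝕜 (x + c • y) (x - c • y) = 0 := by
  have hyx : inner 𝕜 y x = 0 := inner_eq_zero_symm.mp hxy
  simp only [inner_add_left, inner_sub_right, inner_smul_left, inner_smul_right, hxy, hyx,
    inner_self_eq_norm_sq_to_K, hnorm]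
  have hc' : conj c * c = 1 := by simp [RCLike.conj_mul, hc]
  linear_combination -(‖y‖ : 𝕜) ^ 2 * hc'

namespace KahlerCurvatureTensor

variable {n : ℕ} (T : KahlerCurvatureTensor n)

def sesqLeft (z w : EuclideanSpace ℂ (Fin n)) :
    EuclideanSpace ℂ (Fin n) →ₗ[ℂ] EuclideanSpace ℂ (Fin n) →ₗ⋆[ℂ] ℂ :=
  LinearMap.mk₂'ₛₗ _ _ (fun x y => T.R x y z w) (fun _ _ _ => T.map_add₁ _ _ _ _ _)
    (fun _ _ _ => T.map_smul₁ _ _ _ _ _) (fun _ _ _ => T.map_add₂ _ _ _ _ _)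
    (fun _ _ _ => T.map_smul₂ _ _ _ _ _)

def sesqRight (x y : EuclideanSpace ℂ (Fin n)) :
    EuclideanSpace ℂ (Fin n) →ₗ[ℂ] EuclideanSpace ℂ (Fin n) →ₗ⋆[ℂ] ℂ :=
  LinearMap.mk₂'ₛₗ _ _ (T.R x y) (T.map_add₃ x y) (fun c z w => T.map_smul₃ c x y z w)
    (T.map_add₄ x y) (fun c z w => T.map_smul₄ c x y z w)

theorem im_R_self (v : EuclideanSpace ℂ (Fin n)) : (T.R v v v v).im = 0 :=
  conj_eq_iff_im.mp (T.conjSym v v v v).symm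

theorem R_smul_self (c : ℂ) (v : EuclideanSpace ℂ (Fin n)) :
    T.R (c • v) (c • v) (c • v) (c • v) = (normSq c : ℂ) ^ 2 * T.R v v v v := by
  simp only [T.map_smul₁, T.map_smul₂, T.map_smul₃, T.map_smul₄, ← mul_conj]
  ring

theorem R_add_smul_sub_smul (c : ℂ) (x y : EuclideanSpace ℂ (Fin n)) :
    T.R (x + c • y) (x + c • y) (x - c • y) (x - c • y)
      = T.R x x x x + (normSq c : ℂ) ^ 2 * T.R y y y y - c ^ 2 * T.R y x y x
        - conj c ^ 2 * T.R x y x y := by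
  simp only [sub_eq_add_neg, ← neg_smul, T.map_add₁, T.map_add₂, T.map_add₃, T.map_add₄,
    T.map_smul₁, T.map_smul₂, T.map_smul₃, T.map_smul₄, map_neg, ← mul_conj]
  linear_combination (-c) * T.sym₁₃ x x y x + conj c * T.symPair x y x x
    - c * conj c * (T.sym₁₃ y x x y + T.sym₁₃ x y y x)
    + c * conj c * (c * T.symPair y x y y + conj c * T.symPair x y y y)

theorem R_add_smul_self_add_R_sub_smul_self (c : ℂ) (x z : EuclideanSpace ℂ (Fin n)) :
    T.R (x + c • z) (x + c • z) (x + c • z) (x + c • z)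
      + T.R (x - c • z) (x - c • z) (x - c • z) (x - c • z)
      = 2 * (T.R x x x x + (normSq c : ℂ) ^ 2 * T.R z z z z) + 8 * normSq c * T.R x x z z
        + 2 * (c ^ 2 * T.R z x z x + conj c ^ 2 * T.R x z x z) := by
  simp only [sub_eq_add_neg, ← neg_smul, T.map_add₁, T.map_add₂, T.map_add₃, T.map_add₄,
    T.map_smul₁, T.map_smul₂, T.map_smul₃, T.map_smul₄, map_neg, ← mul_conj]
  linear_combination 2 * c * conj c *
    (2 * T.symPair z z x x + T.sym₁₃ z x x z + T.sym₁₃ x z z x)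

theorem R_self_eq_zero_of_forall_norm_eq_one
    (h : ∀ u : EuclideanSpace ℂ (Fin n), ‖u‖ = 1 → T.R u u u u = 0)
    (v : EuclideanSpace ℂ (Fin n)) : T.R v v v v = 0 := by
  rcases eq_or_ne v 0 with rfl | hv
  · simpa using T.R_smul_self 0 0
  have hv' : v = (‖v‖ : ℂ) • ((‖v‖⁻¹ : ℂ) • v) := by
    rw [smul_smul, mul_inv_cancel₀ (by simpa using hv), one_smul]
  rw [hv', T.R_smul_self, h _ (by simpa using norm_smul_inv_norm (𝕜 := ℂ) hv), mul_zero]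

theorem R_self_self_eq_zero_of_forall_R_self_eq_zero
    (h : ∀ v : EuclideanSpace ℂ (Fin n), T.R v v v v = 0) (x z : EuclideanSpace ℂ (Fin n)) :
    T.R x x z z = 0 := by
  have h₁ := T.R_add_smul_self_add_R_sub_smul_self 1 x z
  have h_I := T.R_add_smul_self_add_R_sub_smul_self I x z
  simp only [h, add_zero, map_one, ofReal_one, one_pow, mul_zero, mul_one, zero_add, one_mul,
    normSq_I, I_sq, neg_mul, conj_I, even_two, Even.neg_pow] at h₁ h_I
  linear_combination -(h₁ + h_I) / 16

theorem eq_zero_of_forall_R_self_eq_zero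
    (h : ∀ v : EuclideanSpace ℂ (Fin n), T.R v v v v = 0) (x y z w : EuclideanSpace ℂ (Fin n)) :
    T.R x y z w = 0 :=
  have hxx (x z w : EuclideanSpace ℂ (Fin n)) : T.R x x z w = 0 :=
    LinearMap.IsAlt.apply_eq_zero (B := T.sesqRight x x)
      (T.R_self_self_eq_zero_of_forall_R_self_eq_zero h x) z w
  LinearMap.IsAlt.apply_eq_zero (B := T.sesqLeft z w) (fun v => hxx v z w) x y

def IsRicciFlat : Prop :=
  ∀ b : OrthonormalBasis (Fin n) ℂ (EuclideanSpace ℂ (Fin n)),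
    ∀ α : Fin n, ∑ γ : Fin n, T.R (b α) (b α) (b γ) (b γ) = 0

variable {T}

theorem NOB.re_R_self_nonpos {ι : Type*} [Fintype ι] (hT : T.NOB)
    (b : OrthonormalBasis ι ℂ (EuclideanSpace ℂ (Fin n))) (α : ι)
    (hα : ∑ γ, T.R (b α) (b α) (b γ) (b γ) = 0) : (T.R (b α) (b α) (b α) (b α)).re ≤ 0 := by
  classical
  have hre : ∑ γ, (T.R (b α) (b α) (b γ) (b γ)).re = 0 := by
    simpa [re_sum] using congrArg re hα
  rw [← Finset.add_sum_erase _ _ (Finset.mem_univ α)] at hre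
  have hrest : 0 ≤ ∑ γ ∈ Finset.univ.erase α, (T.R (b α) (b α) (b γ) (b γ)).re :=
    Finset.sum_nonneg fun γ hγ => hT _ _ (b.orthonormal.2 (Finset.ne_of_mem_erase hγ).symm)
  linarith

theorem NOB.re_R_self_add_re_R_self_nonneg (hT : T.NOB)
    {x y : EuclideanSpace ℂ (Fin n)} (hxy : inner ℂ x y = 0) (hnorm : ‖x‖ = ‖y‖) :
    0 ≤ (T.R x x x x).re + (T.R y y y y).re := by
  have h (c : ℂ) (hc : ‖c‖ = 1) := hT _ _ (inner_add_smul_sub_smul_eq_zero hxy hc hnorm)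
  have h₁ := h 1 (by simp)
  have h_I := h I (by simp)
  rw [T.R_add_smul_sub_smul] at h₁ h_I
  simp only [map_one, ofReal_one, one_pow, one_mul, sub_re, add_re, sub_nonneg, normSq_I, I_sq,
    neg_mul, sub_neg_eq_add, conj_I, even_two, Even.neg_pow] at h₁ h_I
  linarith

theorem NOB.R_self_eq_zero_of_norm_eq_one (hn : 2 ≤ n) (hT : T.NOB) (hRic : T.IsRicciFlat)
    {x : EuclideanSpace ℂ (Fin n)} (hx : ‖x‖ = 1) : T.R x x x x = 0 := by
  let i : Fin n := ⟨0, by omega⟩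
  let j : Fin n := ⟨1, hn⟩
  obtain ⟨b, rfl⟩ := OrthonormalBasis.exists_apply_eq (𝕜 := ℂ) (by simp) i hx
  have hne : i ≠ j := by simp [i, j, Fin.ext_iff]
  have hi := hT.re_R_self_nonpos b i (hRic b i)
  have hj := hT.re_R_self_nonpos b j (hRic b j)
  have hij := hT.re_R_self_add_re_R_self_nonneg (b.orthonormal.2 hne)
    (by rw [b.orthonormal.1 i, b.orthonormal.1 j])
  exact Complex.ext (by simp only [zero_re]; linarith) (T.im_R_self _)

end KahlerCurvatureTensor

/-- a Kähler algebraic curvature tensor (`n ≥ 2`) with nonnegative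
orthogonal bisectional curvature and vanishing Ricci curvature (for every
unitary frame, `Σ_γ R_{αᾱγγ̄} = 0` for all `α`) satisfies `R_{αᾱαᾱ} = 0` for
every unit vector, and consequently `R ≡ 0`. -/
theorem nob_ricci_flat_implies_flat {n : ℕ} (hn : 2 ≤ n)
    (T : KahlerCurvatureTensor n) (hNOB : T.NOB)
    (hRic : ∀ b : OrthonormalBasis (Fin n) ℂ (EuclideanSpace ℂ (Fin n)),
      ∀ α : Fin n, ∑ γ : Fin n, T.R (b α) (b α) (b γ) (b γ) = 0) :
    (∀ x : EuclideanSpace ℂ (Fin n), ‖x‖ = 1 → T.R x x x x = 0) ∧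
      (∀ x y z w : EuclideanSpace ℂ (Fin n), T.R x y z w = 0) := by
  have hunit (x : EuclideanSpace ℂ (Fin n)) (hx : ‖x‖ = 1) : T.R x x x x = 0 :=
    hNOB.R_self_eq_zero_of_norm_eq_one hn hRic hx
  exact ⟨hunit, T.eq_zero_of_forall_R_self_eq_zero (T.R_self_eq_zero_of_forall_norm_eq_one hunit)⟩
end
end

section
/- Let ξ : [0,∞) → ℝ be smooth with ξ(0)=0, ξ increasing, 0 < ξ < 1 on (0,∞) and lim_{r→∞} ξ(r) = a ∈ (0,1). Let h(r) = exp(−∫_0^r ξ(s)/s ds). Then: (i) lim_{r→∞} ∫_0^r h(s) ds = ∞; (ii) lim_{r→∞} h(r) = 0; (iii) lim_{r→∞} r h(r)/∫_0^r h(s) ds = 1 − a. -/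
open MeasureTheory Filter

lemma wu_zheng_aux_contg (ξ : ℝ → ℝ) (hξ : ContDiffOn ℝ (⊤ : ℕ∞) ξ (Set.Ici 0)) (hξ0 : ξ 0 = 0) :
    ContinuousOn (fun s : ℝ => if s = 0 then derivWithin ξ (Set.Ici 0) 0 else ξ s / s)
      (Set.Ici 0) := by
  set d := derivWithin ξ (Set.Ici 0) 0 with hd
  set g : ℝ → ℝ := fun s => if s = 0 then d else ξ s / s with hg
  intro x hx
  rcases eq_or_lt_of_le (Set.mem_Ici.mp hx) with hx0 | hx0
  · subst hx0
    have hdiff : HasDerivWithinAt ξ d (Set.Ici 0) 0 :=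
      ((hξ.differentiableOn (by simp)) 0 Set.self_mem_Ici).hasDerivWithinAt
    have hslope := hasDerivWithinAt_iff_tendsto_slope.mp hdiff
    rw [Set.Ici_sdiff_left] at hslope
    have h1 : Tendsto g (nhdsWithin 0 (Set.Ioi 0)) (nhds d) := by
      refine hslope.congr' ?_
      filter_upwards [eventually_mem_nhdsWithin] with s hs
      have hs' : s ≠ 0 := ne_of_gt hs
      simp [hg, hs', slope_def_field, hξ0]
    have h0 : Tendsto g (nhdsWithin 0 ({0} : Set ℝ)) (nhds d) := by
      rw [nhdsWithin_singleton]
      have hg0 : g 0 = d := by simp [hg]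
      simpa [hg0] using tendsto_pure_nhds g 0
    have hsplit : (nhdsWithin (0:ℝ) (Set.Ici 0)) =
        nhdsWithin 0 ({0} : Set ℝ) ⊔ nhdsWithin 0 (Set.Ioi 0) := by
      rw [← nhdsWithin_union, Set.union_comm, Set.Ioi_union_left]
    have hg0 : g 0 = d := by simp [hg]
    unfold ContinuousWithinAt
    rw [hg0, hsplit]
    exact tendsto_sup.mpr ⟨h0, h1⟩
  · have hne : ∀ᶠ s in nhdsWithin x (Set.Ici 0), g s = ξ s / s := by
      have hev : ∀ᶠ s in nhds x, s ≠ (0:ℝ) :=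
        eventually_ne_nhds (ne_of_gt hx0)
      filter_upwards [hev.filter_mono nhdsWithin_le_nhds] with s hs
      simp [hg, hs]
    have hbase : ContinuousWithinAt (fun s => ξ s / s) (Set.Ici 0) x :=
      (hξ.continuousOn x hx).div continuousWithinAt_id (ne_of_gt hx0)
    exact hbase.congr_of_eventuallyEq hne (by simp [hg, ne_of_gt hx0])

/-- let `ξ : [0,∞) → ℝ` be smooth with `ξ(0) = 0`, `ξ`
increasing, `0 < ξ < 1` on `(0,∞)` and `lim_{r→∞} ξ(r) = a ∈ (0,1)`. With
`h(r) = exp(−∫_0^r ξ(s)/s ds)`: (i) `∫_0^r h → ∞`; (ii) `h(r) → 0`;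
(iii) `r h(r) / ∫_0^r h(s) ds → 1 − a` as `r → ∞`. -/
theorem wu_zheng_asymptotics (ξ : ℝ → ℝ)
    (hξ : ContDiffOn ℝ (⊤ : ℕ∞) ξ (Set.Ici 0)) (hξ0 : ξ 0 = 0)
    (hmono : MonotoneOn ξ (Set.Ici 0))
    (hξpos : ∀ r : ℝ, 0 < r → 0 < ξ r) (hξlt : ∀ r : ℝ, 0 < r → ξ r < 1)
    (a : ℝ) (ha : a ∈ Set.Ioo (0:ℝ) 1) (hlim : Tendsto ξ atTop (nhds a))
    (h : ℝ → ℝ)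
    (hdef : ∀ r : ℝ, h r = Real.exp (-∫ s in (0:ℝ)..r, ξ s / s)) :
    Tendsto (fun r : ℝ => ∫ s in (0:ℝ)..r, h s) atTop atTop ∧
      Tendsto h atTop (nhds 0) ∧
      Tendsto (fun r : ℝ => r * h r / ∫ s in (0:ℝ)..r, h s) atTop
        (nhds (1 - a)) := by
  obtain ⟨ha0, ha1⟩ := ha
  set d := derivWithin ξ (Set.Ici 0) 0 with hd
  set g : ℝ → ℝ := fun s => if s = 0 then d else ξ s / s with hgdef
  have hgcont : ContinuousOn g (Set.Ici 0) := wu_zheng_aux_contg ξ hξ hξ0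
  set G : ℝ → ℝ := fun s => g (max s 0) with hGdef
  have hGcont : Continuous G :=
    hgcont.comp_continuous (continuous_id.max continuous_const)
      (fun x => Set.mem_Ici.mpr (le_max_right _ _))
  have hGeq : ∀ s : ℝ, 0 < s → G s = ξ s / s := by
    intro s hs
    simp only [hGdef, hgdef, max_eq_left hs.le, if_neg (ne_of_gt hs)]
  set H : ℝ → ℝ := fun r => ∫ s in (0:ℝ)..r, G s with hHdef
  have hHderiv : ∀ r : ℝ, HasDerivAt H (G r) r := fun r =>
    (hGcont.integral_hasStrictDerivAt 0 r).hasDerivAt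
  have hHcont : Continuous H :=
    continuous_iff_continuousAt.mpr fun x => (hHderiv x).continuousAt
  set ht : ℝ → ℝ := fun r => Real.exp (-(H r)) with htdef
  have htpos : ∀ r, 0 < ht r := fun r => Real.exp_pos _
  have htcont : Continuous ht := Real.continuous_exp.comp hHcont.neg
  have hht : ∀ r : ℝ, 0 ≤ r → h r = ht r := by
    intro r hr
    rw [hdef r]
    simp only [htdef, hHdef]
    congr 1
    refine congrArg Neg.neg ?_
    apply intervalIntegral.integral_congr_ae
    refine Filter.Eventually.of_forall (fun s hs => ?_)
    rw [Set.uIoc_of_le hr] at hs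
    exact (hGeq s hs.1).symm
  have hIeq : ∀ r : ℝ, 0 ≤ r → (∫ s in (0:ℝ)..r, h s) = ∫ s in (0:ℝ)..r, ht s := by
    intro r hr
    apply intervalIntegral.integral_congr
    intro s hs
    rw [Set.uIcc_of_le hr] at hs
    exact hht s hs.1
  have hξlea : ∀ s : ℝ, 0 ≤ s → ξ s ≤ a := by
    intro s hs
    refine ge_of_tendsto hlim ?_
    filter_upwards [eventually_ge_atTop (max s 0)] with t ht'
    exact hmono (Set.mem_Ici.mpr hs)
      (Set.mem_Ici.mpr (le_trans (le_max_right s 0) ht'))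
      (le_trans (le_max_left s 0) ht')
  have hξ1pos : 0 < ξ 1 := hξpos 1 one_pos
  have hHsub : ∀ p q : ℝ, H q - H p = ∫ s in p..q, G s := fun p q =>
    intervalIntegral.integral_interval_sub_left (hGcont.intervalIntegrable _ _)
      (hGcont.intervalIntegrable _ _)
  have hinv_int : ∀ (c r : ℝ), 1 ≤ r → IntervalIntegrable (fun s : ℝ => c * s⁻¹) volume 1 r := by
    intro c r hr
    apply ContinuousOn.intervalIntegrable
    intro s hs
    rw [Set.uIcc_of_le hr] at hs
    have hs0 : s ≠ 0 := ne_of_gt (lt_of_lt_of_le one_pos hs.1)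
    exact continuousWithinAt_const.mul (continuousWithinAt_id.inv₀ hs0)
  have hinv_val : ∀ (c r : ℝ), 1 ≤ r → ∫ s in (1:ℝ)..r, c * s⁻¹ = c * Real.log r := by
    intro c r hr
    rw [intervalIntegral.integral_const_mul,
      integral_inv_of_pos one_pos (lt_of_lt_of_le one_pos hr), div_one]
  have hHub : ∀ r : ℝ, 1 ≤ r → H r ≤ H 1 + a * Real.log r := by
    intro r hr
    have key : ∫ s in (1:ℝ)..r, G s ≤ ∫ s in (1:ℝ)..r, a * s⁻¹ := by
      apply intervalIntegral.integral_mono_on hr (hGcont.intervalIntegrable _ _)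
        (hinv_int a r hr)
      intro s hs
      have hs0 : (0:ℝ) < s := lt_of_lt_of_le one_pos hs.1
      rw [hGeq s hs0, div_eq_mul_inv]
      exact mul_le_mul_of_nonneg_right (hξlea s hs0.le) (inv_nonneg.mpr hs0.le)
    have hsub := hHsub 1 r
    rw [hinv_val a r hr] at key
    linarith
  have hHlb : ∀ r : ℝ, 1 ≤ r → H 1 + ξ 1 * Real.log r ≤ H r := by
    intro r hr
    have key : ∫ s in (1:ℝ)..r, ξ 1 * s⁻¹ ≤ ∫ s in (1:ℝ)..r, G s := by
      apply intervalIntegral.integral_mono_on hr (hinv_int _ r hr)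
        (hGcont.intervalIntegrable _ _)
      intro s hs
      have hs0 : (0:ℝ) < s := lt_of_lt_of_le one_pos hs.1
      rw [hGeq s hs0, div_eq_mul_inv]
      exact mul_le_mul_of_nonneg_right
        (hmono (Set.mem_Ici.mpr zero_le_one) (Set.mem_Ici.mpr hs0.le) hs.1)
        (inv_nonneg.mpr hs0.le)
    have hsub := hHsub 1 r
    rw [hinv_val (ξ 1) r hr] at key
    linarith
  have hub : ∀ r : ℝ, 1 ≤ r → ht r ≤ Real.exp (-(H 1)) * r ^ (-(ξ 1)) := by
    intro r hr
    have h0r : (0:ℝ) < r := lt_of_lt_of_le one_pos hr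
    simp only [htdef]
    rw [Real.rpow_def_of_pos h0r, ← Real.exp_add]
    apply Real.exp_le_exp.mpr
    have := hHlb r hr
    nlinarith
  have hlb : ∀ r : ℝ, 1 ≤ r → Real.exp (-(H 1)) * r ^ (-a) ≤ ht r := by
    intro r hr
    have h0r : (0:ℝ) < r := lt_of_lt_of_le one_pos hr
    simp only [htdef]
    rw [Real.rpow_def_of_pos h0r, ← Real.exp_add]
    apply Real.exp_le_exp.mpr
    have := hHub r hr
    nlinarith
  -- part (ii)
  have hii : Tendsto h atTop (nhds 0) := by
    have h1 : Tendsto (fun r : ℝ => Real.exp (-(H 1)) * r ^ (-(ξ 1))) atTop (nhds 0) := by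
      have := (tendsto_rpow_neg_atTop hξ1pos).const_mul (Real.exp (-(H 1)))
      simpa using this
    have h2 : Tendsto ht atTop (nhds 0) := by
      refine tendsto_of_tendsto_of_tendsto_of_le_of_le' tendsto_const_nhds h1 ?_ ?_
      · exact Eventually.of_forall fun r => (htpos r).le
      · filter_upwards [eventually_ge_atTop 1] with r hr
        exact hub r hr
    refine h2.congr' ?_
    filter_upwards [eventually_ge_atTop 0] with r hr
    exact (hht r hr).symm
  -- part (i)
  set I : ℝ → ℝ := fun r => ∫ s in (0:ℝ)..r, ht s with hIdef
  have hIsub : ∀ p q : ℝ, I q - I p = ∫ s in p..q, ht s := fun p q =>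
    intervalIntegral.integral_interval_sub_left (htcont.intervalIntegrable _ _)
      (htcont.intervalIntegrable _ _)
  have hrpow_int : ∀ r : ℝ, 1 ≤ r →
      IntervalIntegrable (fun s : ℝ => Real.exp (-(H 1)) * s ^ (-a)) volume 1 r := by
    intro r hr
    apply ContinuousOn.intervalIntegrable
    intro s hs
    rw [Set.uIcc_of_le hr] at hs
    have hs0 : s ≠ 0 := ne_of_gt (lt_of_lt_of_le one_pos hs.1)
    exact (continuousAt_const.mul
      (Real.continuousAt_rpow_const s _ (Or.inl hs0))).continuousWithinAt
  have hilow : ∀ r : ℝ, 1 ≤ r →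
      Real.exp (-(H 1)) * ((r ^ (1 - a) - 1) / (1 - a)) ≤ I r := by
    intro r hr
    have hdiffI := hIsub 1 r
    have hI1 : 0 ≤ I 1 := intervalIntegral.integral_nonneg zero_le_one
      (fun s _ => (htpos s).le)
    have key : ∫ s in (1:ℝ)..r, Real.exp (-(H 1)) * s ^ (-a) ≤ ∫ s in (1:ℝ)..r, ht s := by
      apply intervalIntegral.integral_mono_on hr (hrpow_int r hr)
        (htcont.intervalIntegrable _ _)
      intro s hs
      exact hlb s hs.1
    have hval : ∫ s in (1:ℝ)..r, Real.exp (-(H 1)) * s ^ (-a)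
        = Real.exp (-(H 1)) * ((r ^ (1 - a) - 1) / (1 - a)) := by
      rw [intervalIntegral.integral_const_mul,
        integral_rpow (Or.inl (by linarith : (-1:ℝ) < -a)), Real.one_rpow,
        show (-a + 1) = 1 - a from by ring]
    rw [hval] at key
    linarith
  have hItop : Tendsto I atTop atTop := by
    have h1 : Tendsto (fun r : ℝ => r ^ (1 - a)) atTop atTop :=
      tendsto_rpow_atTop (by linarith)
    have h2 : Tendsto (fun r : ℝ => Real.exp (-(H 1)) * ((r ^ (1 - a) - 1) / (1 - a)))
        atTop atTop := by
      apply Tendsto.const_mul_atTop (Real.exp_pos _)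
      apply Tendsto.atTop_div_const (by linarith : (0:ℝ) < 1 - a)
      simpa [sub_eq_add_neg] using tendsto_atTop_add_const_right atTop (-1 : ℝ) h1
    exact tendsto_atTop_mono' atTop (eventually_atTop.mpr ⟨1, hilow⟩) h2
  have hi : Tendsto (fun r : ℝ => ∫ s in (0:ℝ)..r, h s) atTop atTop := by
    refine hItop.congr' ?_
    filter_upwards [eventually_ge_atTop 0] with r hr
    exact (hIeq r hr).symm
  -- part (iii)
  have hintξ : ∀ p q : ℝ, 0 ≤ p → p ≤ q →
      IntervalIntegrable (fun s => (1 - ξ s) * ht s) volume p q := by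
    intro p q hp hpq
    apply ContinuousOn.intervalIntegrable
    rw [Set.uIcc_of_le hpq]
    have hsub : Set.Icc p q ⊆ Set.Ici (0:ℝ) := fun x hx => le_trans hp hx.1
    exact (continuousOn_const.sub (hξ.continuousOn.mono hsub)).mul htcont.continuousOn
  have hphider : ∀ x : ℝ, 0 < x → HasDerivAt (fun r => r * ht r) ((1 - ξ x) * ht x) x := by
    intro x hx
    have hht' : HasDerivAt ht (Real.exp (-(H x)) * -(G x)) x := ((hHderiv x).neg).exp
    have hmul := (hasDerivAt_id x).mul hht'
    refine hmul.congr_deriv ?_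
    rw [hGeq x hx]
    simp only [htdef, id_eq]
    field_simp
    ring
  have hftc : ∀ p q : ℝ, 1 ≤ p → p ≤ q →
      q * ht q - p * ht p = ∫ s in p..q, (1 - ξ s) * ht s := by
    intro p q hp hpq
    have key := intervalIntegral.integral_eq_sub_of_hasDerivAt
      (f := fun r => r * ht r) (f' := fun s => (1 - ξ s) * ht s) (a := p) (b := q)
      (fun s hs => by
        rw [Set.uIcc_of_le hpq] at hs
        exact hphider s (lt_of_lt_of_le one_pos (le_trans hp hs.1)))
      (hintξ p q (le_trans zero_le_one hp) hpq)
    exact key.symm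
  have hIne : ∀ᶠ r in atTop, 0 < I r := hItop.eventually_gt_atTop 0
  have hlow2 : ∀ r : ℝ, 1 ≤ r →
      (1 - a) * I r + (ht 1 - (1 - a) * I 1) ≤ r * ht r := by
    intro r hr
    have hftc1 := hftc 1 r le_rfl hr
    have hIr := hIsub 1 r
    have hmono' : (1 - a) * (I r - I 1) ≤ ∫ s in (1:ℝ)..r, (1 - ξ s) * ht s := by
      rw [hIr, ← intervalIntegral.integral_const_mul]
      apply intervalIntegral.integral_mono_on hr
        ((htcont.intervalIntegrable _ _).const_mul _) (hintξ 1 r zero_le_one hr)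
      intro s hs
      have hsa := hξlea s (le_trans zero_le_one hs.1)
      nlinarith [htpos s]
    rw [mul_sub] at hmono'
    linarith
  have hQlim : Tendsto (fun r => r * ht r / I r) atTop (nhds (1 - a)) := by
    rw [tendsto_order]
    constructor
    · intro b hb
      have hc : Tendsto (fun r => (1 - a) + (ht 1 - (1 - a) * I 1) / I r) atTop
          (nhds (1 - a)) := by
        have hz : Tendsto (fun r => (ht 1 - (1 - a) * I 1) / I r) atTop (nhds 0) :=
          tendsto_const_nhds.div_atTop hItop
        simpa using (tendsto_const_nhds.add hz :
          Tendsto (fun r => (1 - a) + (ht 1 - (1 - a) * I 1) / I r) atTop (nhds ((1 - a) + 0)))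
      filter_upwards [hc.eventually_const_lt hb, hIne, eventually_ge_atTop 1] with r h1 h2 h3
      refine lt_of_lt_of_le h1 ?_
      have heq : (1 - a) + (ht 1 - (1 - a) * I 1) / I r
          = ((1 - a) * I r + (ht 1 - (1 - a) * I 1)) / I r := by
        field_simp
      rw [heq]
      exact (div_le_div_iff_of_pos_right h2).mpr (hlow2 r h3)
    · intro b hb
      set ε := (b - (1 - a)) / 2 with hε
      have hεpos : 0 < ε := by rw [hε]; linarith
      obtain ⟨R₀, hR₀⟩ := eventually_atTop.mp (hlim.eventually_const_lt
        (show a - ε < a by linarith))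
      set R := max R₀ 1 with hRdef
      have hR1 : (1:ℝ) ≤ R := le_max_right _ _
      have hup : ∀ r : ℝ, R ≤ r →
          r * ht r ≤ (1 - a + ε) * I r + (R * ht R - (1 - a + ε) * I R) := by
        intro r hr
        have hftc1 := hftc R r hR1 hr
        have hIr := hIsub R r
        have hmono' : ∫ s in R..r, (1 - ξ s) * ht s ≤ (1 - a + ε) * (I r - I R) := by
          rw [hIr, ← intervalIntegral.integral_const_mul]
          apply intervalIntegral.integral_mono_on hr
            (hintξ R r (le_trans zero_le_one hR1) hr)
            ((htcont.intervalIntegrable _ _).const_mul _)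
          intro s hs
          have hξs : a - ε < ξ s := hR₀ s (le_trans (le_max_left _ _) hs.1)
          nlinarith [htpos s]
        rw [mul_sub] at hmono'
        linarith
      have hc : Tendsto (fun r => (1 - a + ε) + (R * ht R - (1 - a + ε) * I R) / I r)
          atTop (nhds (1 - a + ε)) := by
        have hz : Tendsto (fun r => (R * ht R - (1 - a + ε) * I R) / I r) atTop (nhds 0) :=
          tendsto_const_nhds.div_atTop hItop
        simpa using (tendsto_const_nhds.add hz :
          Tendsto (fun r => (1 - a + ε) + (R * ht R - (1 - a + ε) * I R) / I r) atTop
            (nhds ((1 - a + ε) + 0)))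
      have hlf : 1 - a + ε < b := by rw [hε]; linarith
      filter_upwards [hc.eventually_lt_const hlf, hIne, eventually_ge_atTop R] with r h1 h2 h3
      refine lt_of_le_of_lt ?_ h1
      have heq : (1 - a + ε) + (R * ht R - (1 - a + ε) * I R) / I r
          = ((1 - a + ε) * I r + (R * ht R - (1 - a + ε) * I R)) / I r := by
        field_simp
      rw [heq]
      exact (div_le_div_iff_of_pos_right h2).mpr (hup r h3)
  have hiii : Tendsto (fun r : ℝ => r * h r / ∫ s in (0:ℝ)..r, h s) atTop
      (nhds (1 - a)) := by
    refine hQlim.congr' ?_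
    filter_upwards [eventually_ge_atTop 0] with r hr
    rw [hht r hr, hIeq r hr]
  exact ⟨hi, hii, hiii⟩
end

section
/- Let ξ, h, f be as in the Wu–Zheng construction with 0 < ξ < 1, ξ(0)=0, ξ' > 0, lim ξ = a ∈ (0,1). Define C(r) = (2/(rf(r))²)(∫_0^r h(s)ds − r h(r)) where f(r) = (1/r)∫_0^r h. Then lim_{r→∞} C(r)·∫_0^r h(s) ds = 2a, and consequently lim_{r→∞} h(r) C(r) = 0. -/
open MeasureTheory Filter intervalIntegral

/-- let `ξ, h, f` be as in the Wu–Zheng construction with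
`ξ(0) = 0`, `ξ' > 0`, `0 < ξ < 1` and `lim ξ = a ∈ (0,1)`. Define
`C(r) = (2/(r f(r))²) (∫_0^r h(s) ds − r h(r))` where
`f(r) = (1/r) ∫_0^r h`. Then `lim_{r→∞} C(r) ∫_0^r h(s) ds = 2a` and
consequently `lim_{r→∞} h(r) C(r) = 0`. -/
theorem wu_zheng_C_asymptotics (ξ : ℝ → ℝ)
    (hξ : ContDiffOn ℝ (⊤ : ℕ∞) ξ (Set.Ici 0)) (hξ0 : ξ 0 = 0)
    (hξ' : ∀ r : ℝ, 0 < r → 0 < deriv ξ r)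
    (hξpos : ∀ r : ℝ, 0 < r → 0 < ξ r) (hξlt : ∀ r : ℝ, 0 < r → ξ r < 1)
    (a : ℝ) (ha : a ∈ Set.Ioo (0:ℝ) 1) (hlim : Tendsto ξ atTop (nhds a))
    (h f C : ℝ → ℝ)
    (hdef : ∀ r : ℝ, h r = Real.exp (-∫ s in (0:ℝ)..r, ξ s / s))
    (hfdef : ∀ r : ℝ, 0 < r → f r = (∫ s in (0:ℝ)..r, h s) / r)
    (hCdef : ∀ r : ℝ, 0 < r →
      C r = 2 / (r * f r) ^ 2 * ((∫ s in (0:ℝ)..r, h s) - r * h r)) :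
    Tendsto (fun r : ℝ => C r * ∫ s in (0:ℝ)..r, h s) atTop (nhds (2 * a)) ∧
      Tendsto (fun r : ℝ => h r * C r) atTop (nhds 0) := by
  obtain ⟨ha0, ha1⟩ := ha
  set g : ℝ → ℝ := fun s => ξ s / s with hg_def
  set J : ℝ → ℝ := fun r => ∫ s in (0:ℝ)..r, ξ s / s with hJ_def
  set I : ℝ → ℝ := fun r => ∫ s in (0:ℝ)..r, h s with hI_def
  have hξc : ContinuousOn ξ (Set.Ici 0) := hξ.continuousOn
  have hξnn : ∀ s : ℝ, 0 ≤ s → 0 ≤ ξ s := by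
    intro s hs
    rcases hs.eq_or_lt with h'|h'
    · simp [← h', hξ0]
    · exact (hξpos s h').le
  -- a linear bound on ξ near 0
  have hM : ∃ M : ℝ, 0 ≤ M ∧ ∀ s ∈ Set.Icc (0:ℝ) 1, ξ s ≤ M * s := by
    set φ := derivWithin ξ (Set.Ici 0) with hφ
    have hφc : ContinuousOn φ (Set.Ici 0) :=
      hξ.continuousOn_derivWithin (uniqueDiffOn_Ici 0) (by simp)
    obtain ⟨M, hMb⟩ := isCompact_Icc.exists_bound_of_continuousOn
      (hφc.mono (Set.Icc_subset_Ici_self : Set.Icc (0:ℝ) 1 ⊆ Set.Ici 0))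
    have hM0 : 0 ≤ M := le_trans (norm_nonneg _) (hMb 0 ⟨le_refl 0, zero_le_one⟩)
    refine ⟨M, hM0, fun s hs => ?_⟩
    have hd : ∀ x ∈ Set.Icc (0:ℝ) 1, HasDerivWithinAt ξ (φ x) (Set.Icc (0:ℝ) 1) x := by
      intro x hx
      exact ((hξ.differentiableOn (by simp) x (Set.Icc_subset_Ici_self hx)).hasDerivWithinAt).mono
        Set.Icc_subset_Ici_self
    have := (convex_Icc (0:ℝ) 1).norm_image_sub_le_of_norm_hasDerivWithin_le hd hMb
      ⟨le_refl 0, zero_le_one⟩ hs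
    rw [hξ0, sub_zero, sub_zero] at this
    calc ξ s ≤ |ξ s| := le_abs_self _
      _ ≤ M * |s| := this
      _ = M * s := by rw [abs_of_nonneg hs.1]
  obtain ⟨M, hM0, hMb⟩ := hM
  have hgnn : ∀ s ∈ Set.Ioc (0:ℝ) 1, g s ≤ M := by
    intro s hs
    rw [hg_def]
    rw [div_le_iff₀ hs.1]
    exact hMb s ⟨hs.1.le, hs.2⟩
  have hgc : ContinuousOn g (Set.Ioi 0) := by
    apply ContinuousOn.div (hξc.mono Set.Ioi_subset_Ici_self) continuousOn_id
    intro s hs; exact ne_of_gt hs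
  have hgint : ∀ r : ℝ, 0 < r → IntervalIntegrable g volume 0 r := by
    intro r hr
    rw [intervalIntegrable_iff_integrableOn_Ioc_of_le hr.le]
    apply Integrable.mono' (integrable_const (max M 1))
      ((hgc.mono (Set.Ioc_subset_Ioi_self)).aestronglyMeasurable measurableSet_Ioc)
    rw [ae_restrict_iff' measurableSet_Ioc]
    apply Eventually.of_forall
    intro s hs
    have hg0 : 0 ≤ g s := div_nonneg (hξnn s hs.1.le) hs.1.le
    rw [Real.norm_eq_abs, abs_of_nonneg hg0]
    rcases le_or_gt s 1 with h1 | h1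
    · exact le_max_of_le_left (hgnn s ⟨hs.1, h1⟩)
    · refine le_max_of_le_right ?_
      rw [hg_def]
      exact (div_le_one (lt_trans one_pos h1)).2
        (le_trans (hξlt s hs.1).le h1.le)
  have hJd : ∀ r : ℝ, 0 < r → HasDerivAt J (g r) r := by
    intro r hr
    exact integral_hasDerivAt_right (hgint r hr)
      (hgc.stronglyMeasurableAtFilter isOpen_Ioi r hr)
      (hgc.continuousAt (Ioi_mem_nhds hr))
  have hhd : ∀ r : ℝ, 0 < r → HasDerivAt h (-(g r) * h r) r := by
    intro r hr
    have : HasDerivAt (fun r => Real.exp (-J r)) (Real.exp (-J r) * (-(g r))) r :=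
      (((hJd r hr).neg).exp)
    have he : (fun r => Real.exp (-J r)) = h := by
      funext x; rw [hdef x]
    rw [he] at this
    have hx : Real.exp (-J r) = h r := (hdef r).symm
    rw [hx] at this
    simpa [mul_comm] using this
  have hhpos : ∀ r : ℝ, 0 < h r := fun r => by rw [hdef r]; exact Real.exp_pos _
  have hJnn : ∀ r : ℝ, 0 ≤ r → 0 ≤ J r := by
    intro r hr
    apply intervalIntegral.integral_nonneg hr
    intro u hu
    rcases hu.1.eq_or_lt with h'|h'
    · simp [hg_def, ← h', hξ0]
    · exact div_nonneg (hξnn u hu.1) hu.1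
  have hhle1 : ∀ r : ℝ, 0 ≤ r → h r ≤ 1 := by
    intro r hr
    rw [hdef r]
    apply Real.exp_le_one_iff.2
    simpa using hJnn r hr
  have hhc : ContinuousOn h (Set.Ioi 0) := fun r hr =>
    (hhd r hr).continuousAt.continuousWithinAt
  have hhint : ∀ r : ℝ, 0 < r → IntervalIntegrable h volume 0 r := by
    intro r hr
    rw [intervalIntegrable_iff_integrableOn_Ioc_of_le hr.le]
    apply Integrable.mono' (integrable_const 1)
      ((hhc.mono (Set.Ioc_subset_Ioi_self)).aestronglyMeasurable measurableSet_Ioc)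
    rw [ae_restrict_iff' measurableSet_Ioc]
    apply Eventually.of_forall
    intro s hs
    rw [Real.norm_eq_abs, abs_of_nonneg (hhpos s).le]
    exact hhle1 s hs.1.le
  have hId : ∀ r : ℝ, 0 < r → HasDerivAt I (h r) r := by
    intro r hr
    exact integral_hasDerivAt_right (hhint r hr)
      (hhc.stronglyMeasurableAtFilter isOpen_Ioi r hr)
      (hhc.continuousAt (Ioi_mem_nhds hr))
  have hud : ∀ r : ℝ, 0 < r → HasDerivAt (fun r => r * h r) (h r * (1 - ξ r)) r := by
    intro r hr
    have := (hasDerivAt_id r).mul (hhd r hr)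
    refine this.congr_deriv ?_
    have e : r * (ξ r / r) = ξ r := mul_div_cancel₀ _ hr.ne'
    show 1 * h r + r * (-(ξ r / r) * h r) = h r * (1 - ξ r)
    linear_combination -(h r) * e
  have hIpos : ∀ r : ℝ, 0 < r → 0 < I r := by
    intro r hr
    exact intervalIntegral.intervalIntegral_pos_of_pos_on (hhint r hr)
      (fun x _ => hhpos x) hr
  -- subtraction identities
  have hJsub : ∀ p r : ℝ, 0 < p → p ≤ r → J r - J p = ∫ s in p..r, g s := by
    intro p r hp hpr
    exact (integral_interval_sub_left (hgint r (lt_of_lt_of_le hp hpr)) (hgint p hp))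
  have hIsub : ∀ p r : ℝ, 0 < p → p ≤ r → I r - I p = ∫ s in p..r, h s := by
    intro p r hp hpr
    exact (integral_interval_sub_left (hhint r (lt_of_lt_of_le hp hpr)) (hhint p hp))
  have hIccIoi : ∀ p r : ℝ, 0 < p → Set.uIcc p r ⊆ Set.Ioi 0 → True := fun _ _ _ _ => trivial
  -- upper bound on J-increments from upper bound on ξ
  have hJub : ∀ b R : ℝ, 0 < R → (∀ s, R ≤ s → ξ s ≤ b) → ∀ r, R ≤ r →
      J r - J R ≤ b * (Real.log r - Real.log R) := by
    intro b R hR hb r hr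
    have hRr : (0:ℝ) < r := lt_of_lt_of_le hR hr
    have hsub : Set.uIcc R r ⊆ Set.Ioi 0 := by
      rw [Set.uIcc_of_le hr]
      intro x hx; exact lt_of_lt_of_le hR hx.1
    have hint1 : IntervalIntegrable g volume R r :=
      (hgc.mono hsub).intervalIntegrable
    have hint2 : IntervalIntegrable (fun s => b * s⁻¹) volume R r := by
      apply ContinuousOn.intervalIntegrable
      exact (continuousOn_const.mul (continuousOn_inv₀.mono
        (fun x hx => ne_of_gt (hsub hx))))
    rw [hJsub R r hR hr]
    calc (∫ s in R..r, g s) ≤ ∫ s in R..r, b * s⁻¹ := by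
          apply intervalIntegral.integral_mono_on hr hint1 hint2
          intro x hx
          have hx0 : 0 < x := lt_of_lt_of_le hR hx.1
          show ξ x / x ≤ b * x⁻¹
          rw [div_eq_mul_inv]
          apply mul_le_mul_of_nonneg_right (hb x hx.1) (inv_nonneg.2 hx0.le)
      _ = b * (Real.log r - Real.log R) := by
          rw [intervalIntegral.integral_const_mul, integral_inv_of_pos hR hRr,
            Real.log_div (ne_of_gt hRr) (ne_of_gt hR)]
  have hJlb : ∀ b R : ℝ, 0 < R → (∀ s, R ≤ s → b ≤ ξ s) → ∀ r, R ≤ r →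
      b * (Real.log r - Real.log R) ≤ J r - J R := by
    intro b R hR hb r hr
    have hRr : (0:ℝ) < r := lt_of_lt_of_le hR hr
    have hsub : Set.uIcc R r ⊆ Set.Ioi 0 := by
      rw [Set.uIcc_of_le hr]
      intro x hx; exact lt_of_lt_of_le hR hx.1
    have hint1 : IntervalIntegrable g volume R r :=
      (hgc.mono hsub).intervalIntegrable
    have hint2 : IntervalIntegrable (fun s => b * s⁻¹) volume R r := by
      apply ContinuousOn.intervalIntegrable
      exact (continuousOn_const.mul (continuousOn_inv₀.mono
        (fun x hx => ne_of_gt (hsub hx))))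
    rw [hJsub R r hR hr]
    calc b * (Real.log r - Real.log R) = ∫ s in R..r, b * s⁻¹ := by
          rw [intervalIntegral.integral_const_mul, integral_inv_of_pos hR hRr,
            Real.log_div (ne_of_gt hRr) (ne_of_gt hR)]
      _ ≤ ∫ s in R..r, g s := by
          apply intervalIntegral.integral_mono_on hr hint2 hint1
          intro x hx
          have hx0 : 0 < x := lt_of_lt_of_le hR hx.1
          show b * x⁻¹ ≤ ξ x / x
          rw [div_eq_mul_inv]
          apply mul_le_mul_of_nonneg_right (hb x hx.1) (inv_nonneg.2 hx0.le)
  -- h increments from J increments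
  have hhsplit : ∀ p r : ℝ, h r = h p * Real.exp (-(J r - J p)) := by
    intro p r
    rw [hdef r, hdef p, ← Real.exp_add]
    congr 1
    show -J r = -J p + -(J r - J p)
    ring
  have hItop : Tendsto I atTop atTop := by
    set b : ℝ := (1 + a) / 2 with hb_def
    have hab : a < b := by rw [hb_def]; linarith
    have hb1 : b < 1 := by rw [hb_def]; linarith
    have hb0 : 0 < b := by rw [hb_def]; linarith
    obtain ⟨R, hR⟩ := (((hlim.eventually (eventually_lt_nhds hab)).and
      (eventually_gt_atTop (0:ℝ))).and (eventually_ge_atTop (1:ℝ))).exists_forall_of_atTop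
    have hR0 : 0 < R := (hR R le_rfl).1.2
    -- h s ≥ c * s^(-b) for s ≥ R
    set c : ℝ := h R * Real.exp (b * Real.log R) with hc_def
    have hc0 : 0 < c := mul_pos (hhpos R) (Real.exp_pos _)
    have hhb : ∀ s, R ≤ s → c * s ^ (-b) ≤ h s := by
      intro s hs
      have hs0 : 0 < s := lt_of_lt_of_le hR0 hs
      have hJ : J s - J R ≤ b * (Real.log s - Real.log R) :=
        hJub b R hR0 (fun u hu => ((hR u hu).1.1).le) s hs
      rw [hhsplit R s]
      rw [hc_def, Real.rpow_def_of_pos hs0, mul_assoc, ← Real.exp_add]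
      apply mul_le_mul_of_nonneg_left _ (hhpos R).le
      apply Real.exp_le_exp.2
      nlinarith [hJ]
    -- lower bound on I
    have hIlow : ∀ r, R ≤ r → I R + c * ((r ^ (1 - b) - R ^ (1 - b)) / (1 - b)) ≤ I r := by
      intro r hr
      have hr0 : 0 < r := lt_of_lt_of_le hR0 hr
      have hsub : Set.uIcc R r ⊆ Set.Ioi 0 := by
        rw [Set.uIcc_of_le hr]
        intro x hx; exact lt_of_lt_of_le hR0 hx.1
      have hint1 : IntervalIntegrable (fun s => c * s ^ (-b)) volume R r := by
        apply ContinuousOn.intervalIntegrable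
        apply continuousOn_const.mul
        apply ContinuousOn.rpow_const continuousOn_id
        intro x hx
        exact Or.inl (ne_of_gt (hsub hx))
      have hint2 : IntervalIntegrable h volume R r := (hhc.mono hsub).intervalIntegrable
      have hmono : (∫ s in R..r, c * s ^ (-b)) ≤ ∫ s in R..r, h s := by
        apply intervalIntegral.integral_mono_on hr hint1 hint2
        intro x hx
        exact hhb x hx.1
      have hval : (∫ s in R..r, c * s ^ (-b)) =
          c * ((r ^ (1 - b) - R ^ (1 - b)) / (1 - b)) := by
        rw [intervalIntegral.integral_const_mul, integral_rpow (Or.inl (by linarith)),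
          show -b + 1 = 1 - b by ring]
      have := hIsub R r hR0 hr
      nlinarith [hmono, hval, this]
    apply tendsto_atTop_mono' atTop _ _
    · exact fun r => I R + c * ((r ^ (1 - b) - R ^ (1 - b)) / (1 - b))
    · filter_upwards [eventually_ge_atTop R] with r hr using hIlow r hr
    · apply tendsto_atTop_add_const_left
      apply Tendsto.const_mul_atTop hc0
      apply Tendsto.atTop_div_const (by linarith)
      apply tendsto_atTop_add_const_right
      exact tendsto_rpow_atTop (by linarith)
  have hh0 : Tendsto h atTop (nhds 0) := by
    obtain ⟨R, hR⟩ := (((hlim.eventually (eventually_gt_nhds (by linarith : a/2 < a))).and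
      (eventually_gt_atTop (0:ℝ))).and (eventually_ge_atTop (1:ℝ))).exists_forall_of_atTop
    have hR0 : 0 < R := (hR R le_rfl).1.2
    have hbd : ∀ r, R ≤ r →
        h r ≤ h R * Real.exp (-(a/2) * (Real.log r - Real.log R)) := by
      intro r hr
      have hJ : (a/2) * (Real.log r - Real.log R) ≤ J r - J R :=
        hJlb (a/2) R hR0 (fun u hu => ((hR u hu).1.1).le) r hr
      rw [hhsplit R r]
      apply mul_le_mul_of_nonneg_left _ (hhpos R).le
      apply Real.exp_le_exp.2
      linarith
    have hB : Tendsto (fun r => h R * Real.exp (-(a/2) * (Real.log r - Real.log R)))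
        atTop (nhds 0) := by
      rw [show (0:ℝ) = h R * 0 by ring]
      apply Tendsto.const_mul
      apply Real.tendsto_exp_atBot.comp
      apply Tendsto.const_mul_atTop_of_neg (by linarith : -(a/2) < 0)
      apply tendsto_atTop_add_const_right
      exact Real.tendsto_log_atTop
    apply squeeze_zero' _ _ hB
    · filter_upwards with r using (hhpos r).le
    · filter_upwards [eventually_ge_atTop R] with r hr using hbd r hr
  have hratio : Tendsto (fun r => r * h r / I r) atTop (nhds (1 - a)) := by
    rw [Metric.tendsto_atTop]
    intro ε hε
    have hε4 : 0 < ε / 4 := by linarith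
    obtain ⟨R, hR⟩ := ((hlim.eventually (Metric.ball_mem_nhds a hε4)).and
      (eventually_gt_atTop (0:ℝ))).exists_forall_of_atTop
    have hR0 : 0 < R := (hR R le_rfl).2
    set K : ℝ := |R * h R - (1 - a) * I R| with hK_def
    have hK0 : 0 ≤ K := abs_nonneg _
    obtain ⟨N, hN⟩ := ((hItop.eventually_gt_atTop (4 * K / ε)).and
      (eventually_ge_atTop R)).exists_forall_of_atTop
    refine ⟨N, fun r hr => ?_⟩
    obtain ⟨hIr, hrR⟩ := hN r hr
    have hr0 : (0:ℝ) < r := lt_of_lt_of_le hR0 hrR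
    have hIrpos : 0 < I r := hIpos r hr0
    have hIRpos : 0 < I R := hIpos R hR0
    have hsub : Set.uIcc R r ⊆ Set.Ioi 0 := by
      rw [Set.uIcc_of_le hrR]
      intro x hx; exact lt_of_lt_of_le hR0 hx.1
    have hξcc : ContinuousOn ξ (Set.uIcc R r) :=
      hξc.mono (fun x hx => Set.mem_Ici.2 (le_of_lt (Set.mem_Ioi.1 (hsub hx))))
    have hhcc : ContinuousOn h (Set.uIcc R r) := hhc.mono hsub
    have hc1 : ContinuousOn (fun s => h s * (1 - ξ s)) (Set.uIcc R r) :=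
      hhcc.mul (continuousOn_const.sub hξcc)
    have hc2 : ContinuousOn (fun s => h s * (a - ξ s)) (Set.uIcc R r) :=
      hhcc.mul (continuousOn_const.sub hξcc)
    have hu : (∫ s in R..r, h s * (1 - ξ s)) = r * h r - R * h R := by
      apply intervalIntegral.integral_eq_sub_of_hasDerivAt
      · intro x hx
        exact hud x (hsub hx)
      · exact hc1.intervalIntegrable
    have hsplit : (∫ s in R..r, h s * (1 - ξ s)) =
        (1 - a) * (∫ s in R..r, h s) + ∫ s in R..r, h s * (a - ξ s) := by
      rw [← intervalIntegral.integral_const_mul,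
        ← intervalIntegral.integral_add (f := fun x => (1 - a) * h x)
          ((continuousOn_const.mul hhcc).intervalIntegrable) (hc2.intervalIntegrable)]
      apply intervalIntegral.integral_congr
      intro x hx; ring
    have hIsub' : I r - I R = ∫ s in R..r, h s := hIsub R r hR0 hrR
    have hD : |∫ s in R..r, h s * (a - ξ s)| ≤ ε/4 * I r := by
      calc |∫ s in R..r, h s * (a - ξ s)| ≤ ∫ s in R..r, |h s * (a - ξ s)| :=
            intervalIntegral.abs_integral_le_integral_abs hrR
        _ ≤ ∫ s in R..r, ε/4 * h s := by
            apply intervalIntegral.integral_mono_on hrR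
              (hc2.abs.intervalIntegrable)
              ((continuousOn_const.mul hhcc).intervalIntegrable)
            intro x hx
            rw [abs_mul, abs_of_pos (hhpos x)]
            rw [mul_comm]
            apply mul_le_mul_of_nonneg_right _ (hhpos x).le
            have hball := (hR x hx.1).1
            rw [Real.dist_eq, abs_sub_comm] at hball
            exact hball.le
        _ = ε/4 * (I r - I R) := by
            rw [intervalIntegral.integral_const_mul, hIsub']
        _ ≤ ε/4 * I r := by nlinarith
    have hiden : r * h r - (1 - a) * I r = (R * h R - (1 - a) * I R) +
        ∫ s in R..r, h s * (a - ξ s) := by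
      linear_combination -hu + hsplit - (1 - a) * hIsub'
    have hnum : |r * h r - (1 - a) * I r| ≤ K + ε/4 * I r := by
      rw [hiden]
      calc |(R * h R - (1 - a) * I R) + ∫ s in R..r, h s * (a - ξ s)|
          ≤ K + |∫ s in R..r, h s * (a - ξ s)| := abs_add_le _ _
        _ ≤ K + ε/4 * I r := by linarith [hD]
    rw [Real.dist_eq]
    have heq : r * h r / I r - (1 - a) = (r * h r - (1 - a) * I r) / I r := by
      field_simp
    rw [heq, abs_div, abs_of_pos hIrpos]
    rw [div_lt_iff₀ hIrpos]
    have hKlt : K < ε/4 * I r := by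
      rcases hK0.eq_or_lt with h'|h'
      · rw [← h']; positivity
      · have : 4 * K / ε < I r := hIr
        rw [div_lt_iff₀ hε] at this
        nlinarith
    nlinarith [hnum, hKlt, hIrpos]
  -- first limit
  have key : Tendsto (fun r : ℝ => C r * I r) atTop (nhds (2 * a)) := by
    have h1 : Tendsto (fun r => 2 * (1 - r * h r / I r)) atTop (nhds (2 * a)) := by
      have := (tendsto_const_nhds (x := (1:ℝ)) (f := atTop)).sub hratio
      have := (tendsto_const_nhds (x := (2:ℝ)) (f := atTop)).mul this
      convert this using 2
      ring
    apply h1.congr'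
    filter_upwards [eventually_gt_atTop (0:ℝ)] with r hr
    have hfr : r * f r = I r := by
      rw [hfdef r hr]; field_simp; rfl
    rw [hCdef r hr, hfr]
    have hIr : (∫ s in (0:ℝ)..r, h s) = I r := rfl
    rw [hIr]
    have : I r ≠ 0 := (hIpos r hr).ne'
    field_simp
  constructor
  · exact key
  · have h2 : Tendsto (fun r : ℝ => h r / I r) atTop (nhds 0) := by
      have := hh0.mul (hItop.inv_tendsto_atTop)
      simpa [div_eq_mul_inv] using this
    have := key.mul h2
    rw [mul_zero] at this
    apply this.congr'
    filter_upwards [eventually_gt_atTop (0:ℝ)] with r hr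
    have : I r ≠ 0 := (hIpos r hr).ne'
    field_simp
end
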